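/- Let n ≥ 1 be an integer and let β be the symmetric bilinear form on ℝ⁴ with ordered basis (s, e₂, e₃, F) determined by β(s,s) = −n, β(e₂,e₂) = −1, β(e₃,e₃) = −2, β(e₂,e₃) = 1, β(F,F) = 0, β(s,F) = 1, and β(u,v) = 0 for every other pair of distinct basis vectors. Set e₁ = F − 2e₂ − e₃. Then {x ∈ ℝ⁴ : β(x, v) ≥ 0 for every v ∈ {s, e₁, e₂, e₃}} = cone({F, s + nF, 2s + 2nF − 2e₂ − e₃, s + nF − e₂ − e₃}). -/

import Mathlib

/-- The convex cone generated by a set `s`: all finite nonnegative real linear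
combinations of elements of `s`. -/
def coneHull {E : Type*} [AddCommMonoid E] [Module ℝ E] (s : Set E) : Set E :=
  {x | ∃ (n : ℕ) (c : Fin n → ℝ) (g : Fin n → E),
    (∀ i, 0 ≤ c i) ∧ (∀ i, g i ∈ s) ∧ x = ∑ i, c i • g i}

/-- The intersection form on `ℝ⁴` in the ordered basis `(s, e₂, e₃, F)` determined by
`β(s,s)=−n`, `β(e₂,e₂)=−1`, `β(e₃,e₃)=−2`, `β(e₂,e₃)=1`, `β(F,F)=0`, `β(s,F)=1`, and
`β = 0` on every other pair of distinct basis vectors. -/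
def interForm15 (n : ℕ) (x y : Fin 4 → ℝ) : ℝ :=
  -(n : ℝ) * (x 0 * y 0) - x 1 * y 1 - 2 * (x 2 * y 2) + (x 1 * y 2 + x 2 * y 1) +
    x 0 * y 3 + x 3 * y 0


/-! Write `vᵢ` for `s, e₁, e₂, e₃` and `wᵢ` for `F, s + nF, 2s + 2nF − 2e₂ − e₃, s + nF − e₂ − e₃`.
Then `β(wᵢ, vⱼ) = δᵢⱼ`, so every `x` equals `∑ β(x, vᵢ) • wᵢ`: it is a nonnegative combination of
the `wᵢ` exactly when it pairs nonnegatively with every `vᵢ`. -/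

section ConeDuality

variable {E F : Type*} [AddCommMonoid E] [Module ℝ E] [AddCommMonoid F] [Module ℝ F]

lemma sum_smul_mem_coneHull {s : Set E} {m : ℕ} (c : Fin m → ℝ) (g : Fin m → E)
    (hc : ∀ i, 0 ≤ c i) (hg : ∀ i, g i ∈ s) : ∑ i, c i • g i ∈ coneHull s :=
  ⟨m, c, g, hc, hg, rfl⟩

lemma nonneg_of_mem_coneHull {s : Set E} (φ : E →ₗ[ℝ] ℝ) (hs : ∀ g ∈ s, 0 ≤ φ g) {x : E}
    (hx : x ∈ coneHull s) : 0 ≤ φ x := by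
  obtain ⟨m, c, g, hc, hg, rfl⟩ := hx
  simp only [map_sum, map_smul, smul_eq_mul]
  exact Finset.sum_nonneg fun i _ => mul_nonneg (hc i) (hs _ (hg i))

lemma setOf_forall_nonneg_eq_coneHull {m : ℕ} (B : E →ₗ[ℝ] F →ₗ[ℝ] ℝ) (v : Fin m → F)
    (w : Fin m → E) (hpos : ∀ i j, 0 ≤ B (w i) (v j)) (hexp : ∀ x, x = ∑ i, B x (v i) • w i) :
    {x | ∀ u ∈ Set.range v, 0 ≤ B x u} = coneHull (Set.range w) := by
  ext x
  constructor
  · intro hx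
    rw [hexp x]
    exact sum_smul_mem_coneHull _ _ (fun i => hx _ ⟨i, rfl⟩) (fun i => ⟨i, rfl⟩)
  · rintro hx _ ⟨j, rfl⟩
    exact nonneg_of_mem_coneHull (B.flip (v j)) (by rintro _ ⟨i, rfl⟩; exact hpos i j) hx

end ConeDuality

def interForm15ₗ (n : ℕ) : (Fin 4 → ℝ) →ₗ[ℝ] (Fin 4 → ℝ) →ₗ[ℝ] ℝ :=
  LinearMap.mk₂ ℝ (interForm15 n)
    (fun _ _ _ => by simp only [interForm15, Pi.add_apply]; ring)
    (fun _ _ _ => by simp only [interForm15, Pi.smul_apply, smul_eq_mul]; ring)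
    (fun _ _ _ => by simp only [interForm15, Pi.add_apply]; ring)
    (fun _ _ _ => by simp only [interForm15, Pi.smul_apply, smul_eq_mul]; ring)

@[simp]
lemma interForm15ₗ_apply (n : ℕ) (x y : Fin 4 → ℝ) : interForm15ₗ n x y = interForm15 n x y :=
  rfl

/-- `(s, e₁, e₂, e₃)` with `e₁ = F − 2e₂ − e₃`. -/
def effGen15 : Fin 4 → Fin 4 → ℝ :=
  ![![1, 0, 0, 0], ![0, -2, -1, 1], ![0, 1, 0, 0], ![0, 0, 1, 0]]

def nefGen15 (n : ℕ) : Fin 4 → Fin 4 → ℝ :=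
  ![![0, 0, 0, 1], ![1, 0, 0, (n : ℝ)], ![2, -2, -1, 2 * (n : ℝ)], ![1, -1, -1, (n : ℝ)]]

lemma interForm15_nefGen15_effGen15 (n : ℕ) (i j : Fin 4) :
    interForm15 n (nefGen15 n i) (effGen15 j) = if i = j then 1 else 0 := by
  fin_cases i <;> fin_cases j <;> simp [interForm15, nefGen15, effGen15] <;> ring

lemma interForm15_expansion (n : ℕ) (x : Fin 4 → ℝ) :
    x = ∑ i, interForm15ₗ n x (effGen15 i) • nefGen15 n i := by
  ext k
  fin_cases k <;> simp [interForm15, nefGen15, effGen15, Fin.sum_univ_four] <;> ring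

theorem statement15_general (n : ℕ) :
    {x : Fin 4 → ℝ | ∀ v ∈ ({![1, 0, 0, 0], ![0, -2, -1, 1], ![0, 1, 0, 0],
        ![0, 0, 1, 0]} : Set (Fin 4 → ℝ)), 0 ≤ interForm15 n x v} =
      coneHull {![0, 0, 0, 1], ![1, 0, 0, (n : ℝ)], ![2, -2, -1, 2 * (n : ℝ)],
        ![1, -1, -1, (n : ℝ)]} := by
  have h := setOf_forall_nonneg_eq_coneHull (interForm15ₗ n) effGen15 (nefGen15 n)
    (fun i j => by rw [interForm15ₗ_apply, interForm15_nefGen15_effGen15]; split_ifs <;> norm_num)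
    (interForm15_expansion n)
  simpa only [effGen15, nefGen15, interForm15ₗ_apply, Matrix.range_cons, Matrix.range_empty,
    Set.union_empty, Set.singleton_union] using h

/-- With `e₁ = F − 2e₂ − e₃`, the dual cone of `{s, e₁, e₂, e₃}` with
respect to the intersection form is generated by `F`, `s + nF`, `2s + 2nF − 2e₂ − e₃`,
`s + nF − e₂ − e₃`. -/
theorem statement15 (n : ℕ) (hn : 1 ≤ n) :
    {x : Fin 4 → ℝ | ∀ v ∈ ({![1, 0, 0, 0], ![0, -2, -1, 1], ![0, 1, 0, 0],
        ![0, 0, 1, 0]} : Set (Fin 4 → ℝ)), 0 ≤ interForm15 n x v} =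
      coneHull {![0, 0, 0, 1], ![1, 0, 0, (n : ℝ)], ![2, -2, -1, 2 * (n : ℝ)],
        ![1, -1, -1, (n : ℝ)]} :=
  statement15_general n
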